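/- Let P and Q be finitely generated graded rank one projective A(f)-modules embedded in Q_gr(A(f)), and let f: P → Q be a maximal embedding. Then the finite-length module Q/f(P) is supported, as a left k[z]-module, only at points of ℤ ∪ (ℤ − α). -/

import Mathlib

open Polynomial

noncomputable section

/-- The defining relations of the generalized Weyl algebra `A(f)` over `k[z]` with
`σ(z) = z + 1`: `xz = σ(z)x`, `yz = σ⁻¹(z)y`, `xy = f`, `yx = σ⁻¹(f)`.
Generators: `0 ↦ x`, `1 ↦ y`, `2 ↦ z`. -/
inductive gwaRel (k : Type) [Field k] (f : Polynomial k) :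
    FreeAlgebra k (Fin 3) → FreeAlgebra k (Fin 3) → Prop
  | xz : gwaRel k f (FreeAlgebra.ι k 0 * FreeAlgebra.ι k 2)
      ((FreeAlgebra.ι k 2 + 1) * FreeAlgebra.ι k 0)
  | yz : gwaRel k f (FreeAlgebra.ι k 1 * FreeAlgebra.ι k 2)
      ((FreeAlgebra.ι k 2 - 1) * FreeAlgebra.ι k 1)
  | xy : gwaRel k f (FreeAlgebra.ι k 0 * FreeAlgebra.ι k 1)
      (aeval (FreeAlgebra.ι k 2) f)
  | yx : gwaRel k f (FreeAlgebra.ι k 1 * FreeAlgebra.ι k 0)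
      (aeval (FreeAlgebra.ι k 2) (f.comp (X - 1)))

/-- The generalized Weyl algebra `A(f) = k[z]⟨x,y⟩ / (xz-σ(z)x, yz-σ⁻¹(z)y, xy-f, yx-σ⁻¹(f))`. -/
abbrev GWA (k : Type) [Field k] (f : Polynomial k) := RingQuot (gwaRel k f)

def gwaX (k : Type) [Field k] (f : Polynomial k) : GWA k f :=
  RingQuot.mkAlgHom k (gwaRel k f) (FreeAlgebra.ι k 0)

def gwaY (k : Type) [Field k] (f : Polynomial k) : GWA k f :=
  RingQuot.mkAlgHom k (gwaRel k f) (FreeAlgebra.ι k 1)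

def gwaZ (k : Type) [Field k] (f : Polynomial k) : GWA k f :=
  RingQuot.mkAlgHom k (gwaRel k f) (FreeAlgebra.ι k 2)

/-- The canonical `k[z]`-module generator of the degree-`n` component of `A(f)`:
`xⁿ` for `n ≥ 0` and `y⁻ⁿ` for `n < 0`. -/
def gwaMon (k : Type) [Field k] (f : Polynomial k) (n : ℤ) : GWA k f :=
  if 0 ≤ n then gwaX k f ^ n.toNat else gwaY k f ^ (-n).toNat

/-- The degree-`n` component of `A(f)` (as a `k`-subspace): the left `k[z]`-span of the
canonical monomial `mₙ`. -/
def gwaComp (k : Type) [Field k] (f : Polynomial k) (n : ℤ) : Submodule k (GWA k f) :=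
  Submodule.span k {w | ∃ q : Polynomial k, w = aeval (gwaZ k f) q * gwaMon k f n}

/-- A right `A(f)`-module homomorphism between right ideals is graded of degree `0` if it
maps the degree-`n` part of `P` into the degree-`n` part of `Q` for every `n`. -/
def IsGradedHom (k : Type) [Field k] (f : Polynomial k)
    (P Q : Submodule (GWA k f)ᵐᵒᵖ (GWA k f)) (φ : ↥P →ₗ[(GWA k f)ᵐᵒᵖ] ↥Q) : Prop :=
  ∀ (n : ℤ) (m : ↥P), (m : GWA k f) ∈ gwaComp k f n → (φ m : GWA k f) ∈ gwaComp k f n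

/-!
Every element of `A(f)` is uniquely a finite sum `∑ₙ cₙ(z) mₙ` of the monomials `mₙ = gwaMon n`
(uniqueness comes from a faithful representation on `⊕ₙ k[z] eₙ`). A graded right ideal `S` is
therefore described by its coefficient ideals `Jₙ(S) = {p | p(z) mₙ ∈ S}` of `k[z]`, and right
multiplication by `x` and `y` maps `Jₙ(S)` into `Jₙ₊₁(S)` and `Jₙ₋₁(S)` up to factors which are
shifts of `f`. Hence at a point `μ` where no `f(μ + j)`, `j ∈ ℤ`, vanishes, the order at `μ` of the
generator of `Jₙ(S)` does not depend on `n`.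

Let `R = ψ(P) ⊆ Q`. If the generators of `Jₙ(R)` and `Jₙ(Q)` had different orders at such a `μ`
for one `n`, they would for all `n`; then every coefficient of `ψ(P)` is `z - μ` times a coefficient
of `Q`, so `ψ = (z - μ) G` for a graded `G : P → Q` whose image strictly contains `ψ(P)`. So for a
maximal embedding the quotients `dₙ` of these generators only vanish on `ℤ ∪ (ℤ - α)`, and
`q · ∏ₙ dₙ(z - n) ∈ ψ(P)` for every `q ∈ Q`, the product running over the degrees of `q`.
-/

open scoped Pointwise

open Submodule.IsPrincipal (generator generator_mem mem_iff_generator_dvd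
  eq_bot_iff_generator_eq_zero)

lemma SemiconjBy.aeval {R A : Type*} [CommSemiring R] [Semiring A] [Algebra R A]
    {a b c : A} (h : SemiconjBy a b c) (p : R[X]) : SemiconjBy a (aeval b p) (aeval c p) := by
  induction p using Polynomial.induction_on' with
  | add p q hp hq => simpa only [map_add] using hp.add_right hq
  | monomial n r =>
    simpa only [aeval_monomial, ← Algebra.smul_def] using (h.pow_right n).smul_right r

lemma Polynomial.X_sub_C_mul_dvd_of_rootMultiplicity_lt {R : Type*} [CommRing R] [IsDomain R]
    {a b : R[X]} (hab : a ∣ b) (hb : b ≠ 0) {μ : R}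
    (h : rootMultiplicity μ a < rootMultiplicity μ b) : (X - C μ) * a ∣ b := by
  obtain ⟨d, rfl⟩ := hab
  rw [rootMultiplicity_mul hb] at h
  have hd : d.IsRoot μ := (rootMultiplicity_pos (right_ne_zero_of_mul hb)).1 (by omega)
  obtain ⟨e, rfl⟩ := dvd_iff_isRoot.2 hd
  exact ⟨e, by ring⟩

namespace GWA

variable {k : Type} [Field k] {f : k[X]}

variable (f) in
def evalZ : k[X] →ₐ[k] GWA k f := aeval (gwaZ k f)

@[simp] lemma evalZ_X : evalZ f X = gwaZ k f := aeval_X _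

lemma evalZ_taylor (c : k) (p : k[X]) :
    evalZ f (taylor c p) = aeval (gwaZ k f + algebraMap k _ c) p := by
  rw [evalZ, taylor_apply, aeval_comp]
  simp [Algebra.algebraMap_eq_smul_one]

lemma gwaX_mul_gwaZ : gwaX k f * gwaZ k f = (gwaZ k f + 1) * gwaX k f := by
  simpa [gwaX, gwaZ] using RingQuot.mkAlgHom_rel k (gwaRel.xz (k := k) (f := f))

lemma gwaY_mul_gwaZ : gwaY k f * gwaZ k f = (gwaZ k f - 1) * gwaY k f := by
  simpa [gwaY, gwaZ] using RingQuot.mkAlgHom_rel k (gwaRel.yz (k := k) (f := f))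

lemma gwaX_mul_gwaY : gwaX k f * gwaY k f = evalZ f f := by
  simpa [gwaX, gwaY, evalZ, gwaZ, ← aeval_algHom_apply]
    using RingQuot.mkAlgHom_rel k (gwaRel.xy (k := k) (f := f))

lemma gwaY_mul_gwaX : gwaY k f * gwaX k f = evalZ f (taylor (-1) f) := by
  simpa [gwaX, gwaY, evalZ, gwaZ, ← aeval_algHom_apply, taylor_apply, sub_eq_add_neg]
    using RingQuot.mkAlgHom_rel k (gwaRel.yx (k := k) (f := f))

lemma gwaMon_zero : gwaMon k f 0 = 1 := by simp [gwaMon]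

lemma gwaMon_add_one {n : ℤ} (hn : 0 ≤ n) : gwaMon k f (n + 1) = gwaMon k f n * gwaX k f := by
  rw [gwaMon, gwaMon, if_pos hn, if_pos (by omega), ← pow_succ, Int.toNat_add hn zero_le_one]
  rfl

lemma gwaMon_sub_one {n : ℤ} (hn : n ≤ 0) : gwaMon k f (n - 1) = gwaMon k f n * gwaY k f := by
  rcases hn.eq_or_lt with rfl | hn
  · simp [gwaMon]
  rw [gwaMon, gwaMon, if_neg (by omega), if_neg (by omega), ← pow_succ]
  congr 1
  omega

lemma semiconjBy_gwaMon_gwaZ (n : ℤ) :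
    SemiconjBy (gwaMon k f n) (gwaZ k f) (gwaZ k f + n) := by
  have hx : ∀ j : ℕ, SemiconjBy (gwaX k f ^ j) (gwaZ k f) (gwaZ k f + j) := by
    intro j
    induction j with
    | zero => simp [SemiconjBy]
    | succ j ih =>
      rw [pow_succ']
      refine SemiconjBy.mul_left ?_ ih
      rw [SemiconjBy, mul_add, gwaX_mul_gwaZ, (Nat.cast_commute _ _).symm.eq, ← add_mul,
        Nat.cast_succ, add_right_comm, add_assoc]
  have hy : ∀ j : ℕ, SemiconjBy (gwaY k f ^ j) (gwaZ k f) (gwaZ k f - j) := by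
    intro j
    induction j with
    | zero => simp [SemiconjBy]
    | succ j ih =>
      rw [pow_succ']
      refine SemiconjBy.mul_left ?_ ih
      rw [SemiconjBy, mul_sub, gwaY_mul_gwaZ, (Nat.cast_commute _ _).symm.eq, ← sub_mul,
        Nat.cast_succ, sub_sub, add_comm (1 : GWA k f)]
  unfold gwaMon
  split_ifs with hn
  · have h := hx n.toNat
    rwa [← Int.cast_natCast, Int.toNat_of_nonneg hn] at h
  · have h := hy (-n).toNat
    rwa [← Int.cast_natCast, Int.toNat_of_nonneg (by omega), Int.cast_neg, sub_neg_eq_add] at h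

lemma gwaMon_mul_evalZ (n : ℤ) (p : k[X]) :
    gwaMon k f n * evalZ f p = evalZ f (taylor (n : k) p) * gwaMon k f n := by
  rw [evalZ_taylor, map_intCast]
  exact (semiconjBy_gwaMon_gwaZ n).aeval p

variable (f) in
def xCoeff (n : ℤ) : k[X] := if 0 ≤ n then 1 else taylor (n : k) f

variable (f) in
def yCoeff (n : ℤ) : k[X] := if n ≤ 0 then 1 else taylor ((n - 1 : ℤ) : k) f

lemma gwaMon_mul_gwaX (n : ℤ) :
    gwaMon k f n * gwaX k f = evalZ f (xCoeff f n) * gwaMon k f (n + 1) := by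
  unfold xCoeff
  split_ifs with hn
  · rw [map_one, one_mul, gwaMon_add_one hn]
  · have hy := gwaMon_sub_one (f := f) (show n + 1 ≤ 0 by omega)
    rw [add_sub_cancel_right] at hy
    rw [hy, mul_assoc, gwaY_mul_gwaX, gwaMon_mul_evalZ, taylor_taylor]
    push_cast
    ring_nf

lemma gwaMon_mul_gwaY (n : ℤ) :
    gwaMon k f n * gwaY k f = evalZ f (yCoeff f n) * gwaMon k f (n - 1) := by
  unfold yCoeff
  split_ifs with hn
  · rw [map_one, one_mul, gwaMon_sub_one hn]
  · have hx := gwaMon_add_one (f := f) (show 0 ≤ n - 1 by omega)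
    rw [sub_add_cancel] at hx
    rw [hx, mul_assoc, gwaX_mul_gwaY, gwaMon_mul_evalZ]

lemma mem_gwaComp_iff {n : ℤ} {a : GWA k f} :
    a ∈ gwaComp k f n ↔ ∃ p : k[X], a = evalZ f p * gwaMon k f n := by
  refine ⟨fun ha => ?_, fun ⟨p, hp⟩ => Submodule.subset_span ⟨p, hp⟩⟩
  induction ha using Submodule.span_induction with
  | mem a ha => exact ha
  | zero => exact ⟨0, by simp⟩
  | add a b _ _ ha hb =>
    obtain ⟨⟨p, rfl⟩, ⟨q, rfl⟩⟩ := And.intro ha hb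
    exact ⟨p + q, by rw [map_add, add_mul]⟩
  | smul c a _ ha =>
    obtain ⟨p, rfl⟩ := ha
    exact ⟨C c * p, by rw [map_mul, mul_assoc, evalZ, aeval_C, ← Algebra.smul_def]⟩

lemma evalZ_mul_gwaMon_mem (p : k[X]) (n : ℤ) : evalZ f p * gwaMon k f n ∈ gwaComp k f n :=
  mem_gwaComp_iff.2 ⟨p, rfl⟩

lemma gwaMon_mem (n : ℤ) : gwaMon k f n ∈ gwaComp k f n :=
  mem_gwaComp_iff.2 ⟨1, by simp⟩

lemma gwaMon_mul_gwaMon_mem (i j : ℤ) : gwaMon k f i * gwaMon k f j ∈ gwaComp k f (i + j) := by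
  induction j using Int.induction_on with
  | zero => simpa [gwaMon_zero] using gwaMon_mem i
  | succ j ih =>
    obtain ⟨c, hc⟩ := mem_gwaComp_iff.1 ih
    rw [gwaMon_add_one (by omega), ← mul_assoc, hc, mul_assoc, gwaMon_mul_gwaX, ← mul_assoc,
      ← map_mul, ← add_assoc]
    exact evalZ_mul_gwaMon_mem _ _
  | pred j ih =>
    obtain ⟨c, hc⟩ := mem_gwaComp_iff.1 ih
    rw [gwaMon_sub_one (by omega), ← mul_assoc, hc, mul_assoc, gwaMon_mul_gwaY, ← mul_assoc,
      ← map_mul, ← add_sub_assoc]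
    exact evalZ_mul_gwaMon_mem _ _

lemma mul_mem_gwaComp {i j : ℤ} {a b : GWA k f} (ha : a ∈ gwaComp k f i)
    (hb : b ∈ gwaComp k f j) : a * b ∈ gwaComp k f (i + j) := by
  obtain ⟨p, rfl⟩ := mem_gwaComp_iff.1 ha
  obtain ⟨q, rfl⟩ := mem_gwaComp_iff.1 hb
  obtain ⟨c, hc⟩ := mem_gwaComp_iff.1 (gwaMon_mul_gwaMon_mem (f := f) i j)
  rw [mul_assoc, ← mul_assoc (gwaMon k f i), gwaMon_mul_evalZ, mul_assoc, hc, ← mul_assoc,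
    ← mul_assoc, ← map_mul, ← map_mul]
  exact evalZ_mul_gwaMon_mem _ _

section Representation

variable (f)

/-- `repX`, `repY`, `repZ` are the actions of `x`, `y`, `z` in a faithful representation of `A(f)`
on `⊕ₙ k[z] eₙ`, in which `p(z) * gwaMon n` sends `e₀` to `p eₙ`. -/
def repX : Module.End k (ℤ →₀ k[X]) :=
  Finsupp.lsum k fun n => Finsupp.lsingle (n + 1) ∘ₗ
    LinearMap.mulLeft k (if 0 ≤ n then 1 else f) ∘ₗ taylor (1 : k)

def repY : Module.End k (ℤ →₀ k[X]) :=
  Finsupp.lsum k fun n => Finsupp.lsingle (n - 1) ∘ₗ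
    LinearMap.mulLeft k (if n ≤ 0 then 1 else taylor (-1) f) ∘ₗ taylor (-1 : k)

def repZ : Module.End k (ℤ →₀ k[X]) := Algebra.lsmul k k (ℤ →₀ k[X]) (X : k[X])

variable {f}

lemma repX_single (n : ℤ) (g : k[X]) :
    repX f (Finsupp.single n g) =
      Finsupp.single (n + 1) ((if 0 ≤ n then 1 else f) * taylor 1 g) := by
  simp [repX]

lemma repY_single (n : ℤ) (g : k[X]) :
    repY f (Finsupp.single n g) =
      Finsupp.single (n - 1) ((if n ≤ 0 then 1 else taylor (-1) f) * taylor (-1) g) := by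
  simp [repY]

lemma lsmul_single (p g : k[X]) (n : ℤ) :
    Algebra.lsmul k k (ℤ →₀ k[X]) p (Finsupp.single n g) = Finsupp.single n (p * g) := by
  simp

lemma repZ_single (n : ℤ) (g : k[X]) : repZ (Finsupp.single n g) = Finsupp.single n (X * g) :=
  lsmul_single X g n

lemma aeval_repZ (p : k[X]) : aeval (repZ (k := k)) p = Algebra.lsmul k k (ℤ →₀ k[X]) p := by
  rw [repZ, aeval_algHom_apply, aeval_X_left_apply]

lemma lift_repGens_eq_of_gwaRel {a b : FreeAlgebra k (Fin 3)} (h : gwaRel k f a b) :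
    FreeAlgebra.lift k ![repX f, repY f, repZ] a =
      FreeAlgebra.lift k ![repX f, repY f, repZ] b := by
  cases h <;> simp only [map_mul, map_add, map_sub, map_one, FreeAlgebra.lift_ι_apply,
    ← aeval_algHom_apply, Matrix.cons_val, aeval_repZ] <;>
    refine Finsupp.lhom_ext fun n g => ?_ <;>
    simp only [Module.End.mul_apply, LinearMap.add_apply, LinearMap.sub_apply,
      Module.End.one_apply, repX_single, repY_single, repZ_single, lsmul_single,
      ← Finsupp.single_add, ← Finsupp.single_sub, taylor_mul, taylor_X, taylor_taylor, C_1, C_neg]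
  · congr 1; ring
  · congr 1; ring
  · split_ifs <;> first | omega | simp [taylor_taylor]
  · split_ifs <;> first | omega | simp [taylor_apply, sub_eq_add_neg]

variable (f) in
def rep : GWA k f →ₐ[k] Module.End k (ℤ →₀ k[X]) :=
  RingQuot.liftAlgHom k
    ⟨FreeAlgebra.lift k ![repX f, repY f, repZ], fun _ _ => lift_repGens_eq_of_gwaRel⟩

lemma rep_gwaX : rep f (gwaX k f) = repX f := by
  simp [rep, gwaX]

lemma rep_gwaY : rep f (gwaY k f) = repY f := by
  simp [rep, gwaY]

lemma rep_evalZ (p : k[X]) : rep f (evalZ f p) = Algebra.lsmul k k (ℤ →₀ k[X]) p := by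
  rw [evalZ, ← aeval_algHom_apply, ← aeval_repZ]
  simp [rep, gwaZ]

lemma rep_gwaMon_single_zero (n : ℤ) :
    rep f (gwaMon k f n) (Finsupp.single 0 1) = Finsupp.single n 1 := by
  have hx : ∀ j : ℕ, (repX f ^ j) (Finsupp.single 0 1) = Finsupp.single (j : ℤ) 1 := by
    intro j
    induction j with
    | zero => rfl
    | succ j ih => rw [pow_succ', Module.End.mul_apply, ih, repX_single, if_pos (by omega),
        one_mul, taylor_one, C_1, Nat.cast_succ]
  have hy : ∀ j : ℕ, (repY f ^ j) (Finsupp.single 0 1) = Finsupp.single (-j : ℤ) 1 := by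
    intro j
    induction j with
    | zero => rfl
    | succ j ih => rw [pow_succ', Module.End.mul_apply, ih, repY_single, if_pos (by omega),
        one_mul, taylor_one, C_1, Nat.cast_succ, neg_add, sub_eq_add_neg]
  unfold gwaMon
  split_ifs with hn
  · rw [map_pow, rep_gwaX, hx, Int.toNat_of_nonneg hn]
  · rw [map_pow, rep_gwaY, hy, Int.toNat_of_nonneg (by omega), neg_neg]

end Representation

variable (f) in
def ofCoeffs : (ℤ →₀ k[X]) →ₗ[k] GWA k f :=
  Finsupp.lsum k fun n => LinearMap.mulRight k (gwaMon k f n) ∘ₗ (evalZ f).toLinearMap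

lemma ofCoeffs_single (n : ℤ) (p : k[X]) :
    ofCoeffs f (Finsupp.single n p) = evalZ f p * gwaMon k f n := by
  simp [ofCoeffs]

lemma ofCoeffs_injective : Function.Injective (ofCoeffs f) := by
  have hrep : ∀ c, rep f (ofCoeffs f c) (Finsupp.single 0 1) = c := by
    have : (LinearMap.applyₗ (Finsupp.single 0 1)) ∘ₗ (rep f).toLinearMap ∘ₗ ofCoeffs f =
        LinearMap.id := Finsupp.lhom_ext fun n p => by
      simp [ofCoeffs_single, rep_evalZ, rep_gwaMon_single_zero]
    exact fun c => LinearMap.congr_fun this c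
  exact Function.LeftInverse.injective (g := fun a => rep f a (Finsupp.single 0 1)) hrep

lemma span_gwaComp_eq_top : Submodule.span k (⋃ n, (gwaComp k f n : Set (GWA k f))) = ⊤ := by
  set S := Submodule.span k (⋃ n, (gwaComp k f n : Set (GWA k f)))
  have hmul : ∀ a ∈ S, ∀ b ∈ S, a * b ∈ S := by
    intro a ha b hb
    have hHH : (⋃ n, (gwaComp k f n : Set (GWA k f))) * ⋃ n, (gwaComp k f n : Set (GWA k f)) ⊆
        ⋃ n, (gwaComp k f n : Set (GWA k f)) := by
      rintro _ ⟨a, ha, b, hb, rfl⟩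
      obtain ⟨i, hi⟩ := Set.mem_iUnion.1 ha
      obtain ⟨j, hj⟩ := Set.mem_iUnion.1 hb
      exact Set.mem_iUnion.2 ⟨i + j, mul_mem_gwaComp hi hj⟩
    have := Submodule.mul_mem_mul ha hb
    rw [Submodule.span_mul_span] at this
    exact Submodule.span_mono hHH this
  have hmem : ∀ {n : ℤ} {a : GWA k f}, a ∈ gwaComp k f n → a ∈ S :=
    fun ha => Submodule.subset_span (Set.mem_iUnion.2 ⟨_, ha⟩)
  refine Submodule.eq_top_iff'.2 fun a => ?_
  obtain ⟨w, rfl⟩ := RingQuot.mkAlgHom_surjective k (gwaRel k f) a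
  induction w using FreeAlgebra.induction with
  | grade0 r =>
    rw [AlgHom.commutes, Algebra.algebraMap_eq_smul_one, ← gwaMon_zero]
    exact S.smul_mem r (hmem (gwaMon_mem 0))
  | grade1 i =>
    fin_cases i
    · exact hmem (n := 1) (by simpa [gwaMon, gwaX] using gwaMon_mem (f := f) 1)
    · exact hmem (n := -1) (by simpa [gwaMon, gwaY] using gwaMon_mem (f := f) (-1))
    · exact hmem (n := 0) (mem_gwaComp_iff.2 ⟨X, by simp [gwaMon_zero, gwaZ]⟩)
  | mul a b ha hb => rw [map_mul]; exact hmul _ ha _ hb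
  | add a b ha hb => rw [map_add]; exact S.add_mem ha hb

lemma ofCoeffs_surjective : Function.Surjective (ofCoeffs f) := by
  refine LinearMap.range_eq_top.1 (eq_top_iff.2 ?_)
  rw [← span_gwaComp_eq_top, Submodule.span_le]
  intro a ha
  obtain ⟨n, hn⟩ := Set.mem_iUnion.1 ha
  obtain ⟨p, rfl⟩ := mem_gwaComp_iff.1 hn
  exact ⟨_, ofCoeffs_single _ p⟩

variable (f) in
def coeff : GWA k f ≃ₗ[k] (ℤ →₀ k[X]) :=
  (LinearEquiv.ofBijective (ofCoeffs f) ⟨ofCoeffs_injective, ofCoeffs_surjective⟩).symm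

@[simp] lemma ofCoeffs_coeff (a : GWA k f) : ofCoeffs f (coeff f a) = a :=
  (coeff f).symm_apply_apply a

@[simp] lemma coeff_ofCoeffs (c : ℤ →₀ k[X]) : coeff f (ofCoeffs f c) = c :=
  (coeff f).apply_symm_apply c

lemma coeff_evalZ_mul_gwaMon (p : k[X]) (n : ℤ) :
    coeff f (evalZ f p * gwaMon k f n) = Finsupp.single n p := by
  rw [← ofCoeffs_single, coeff_ofCoeffs]

lemma eq_sum_coeff (a : GWA k f) :
    a = (coeff f a).sum fun n p => evalZ f p * gwaMon k f n := by
  conv_lhs => rw [← ofCoeffs_coeff a]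
  rfl

lemma coeff_evalZ_mul (p : k[X]) (a : GWA k f) : coeff f (evalZ f p * a) = p • coeff f a := by
  suffices ∀ c, evalZ f p * ofCoeffs f c = ofCoeffs f (p • c) by
    rw [← ofCoeffs_coeff a, this, coeff_ofCoeffs, coeff_ofCoeffs]
  intro c
  induction c using Finsupp.induction_linear with
  | zero => simp
  | add c d hc hd => rw [map_add, mul_add, hc, hd, smul_add, map_add]
  | single n q => rw [Finsupp.smul_single, ofCoeffs_single, ofCoeffs_single, smul_eq_mul,
      map_mul, mul_assoc]

lemma mem_gwaComp_iff_coeff {n : ℤ} {a : GWA k f} :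
    a ∈ gwaComp k f n ↔ ∃ p : k[X], coeff f a = Finsupp.single n p := by
  rw [mem_gwaComp_iff]
  refine exists_congr fun p => ⟨fun h => by rw [h, coeff_evalZ_mul_gwaMon], fun h => ?_⟩
  rw [← ofCoeffs_coeff a, h, ofCoeffs_single]

lemma evalZ_mul_eq_mul_evalZ_of_mem_gwaComp {n : ℤ} {a : GWA k f} (ha : a ∈ gwaComp k f n)
    (p : k[X]) : evalZ f p * a = a * evalZ f (taylor (-n : k) p) := by
  obtain ⟨q, rfl⟩ := mem_gwaComp_iff.1 ha
  rw [mul_assoc, gwaMon_mul_evalZ, taylor_taylor, add_neg_cancel, taylor_zero, ← mul_assoc,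
    ← mul_assoc, ← map_mul, ← map_mul, mul_comm]

lemma mul_mem_of_mem {S : Submodule (GWA k f)ᵐᵒᵖ (GWA k f)} {a : GWA k f} (ha : a ∈ S)
    (b : GWA k f) : a * b ∈ S :=
  S.smul_mem (MulOpposite.op b) ha

def coeffIdeal (S : Submodule (GWA k f)ᵐᵒᵖ (GWA k f)) (n : ℤ) : Ideal k[X] where
  carrier := {p | evalZ f p * gwaMon k f n ∈ S}
  add_mem' {p q} hp hq := by
    simpa only [Set.mem_ofPred_eq, map_add, add_mul] using S.add_mem hp hq
  zero_mem' := by simp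
  smul_mem' c p hp := by
    simpa only [Set.mem_ofPred_eq, smul_eq_mul, map_mul, mul_assoc,
      evalZ_mul_eq_mul_evalZ_of_mem_gwaComp (evalZ_mul_gwaMon_mem p n)]
      using mul_mem_of_mem hp (evalZ f (taylor (-n : k) c))

lemma mem_coeffIdeal {S : Submodule (GWA k f)ᵐᵒᵖ (GWA k f)} {n : ℤ} {p : k[X]} :
    p ∈ coeffIdeal S n ↔ evalZ f p * gwaMon k f n ∈ S := Iff.rfl

def homogeneousElems (S : Submodule (GWA k f)ᵐᵒᵖ (GWA k f)) : Set (GWA k f) :=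
  {m | m ∈ S ∧ ∃ n : ℤ, m ∈ gwaComp k f n}

def IsGraded (S : Submodule (GWA k f)ᵐᵒᵖ (GWA k f)) : Prop :=
  ∀ a ∈ S, ∀ n, coeff f a n ∈ coeffIdeal S n

lemma coeff_mem_coeffIdeal_of_mem_span {S : Submodule (GWA k f)ᵐᵒᵖ (GWA k f)} {a : GWA k f}
    (ha : a ∈ Submodule.span k (homogeneousElems S)) (n : ℤ) : coeff f a n ∈ coeffIdeal S n := by
  induction ha using Submodule.span_induction with
  | mem a ha =>
    obtain ⟨haS, j, hj⟩ := ha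
    obtain ⟨p, rfl⟩ := mem_gwaComp_iff.1 hj
    rw [coeff_evalZ_mul_gwaMon, Finsupp.single_apply]
    split_ifs with hjn
    · exact hjn ▸ haS
    · exact zero_mem _
  | zero => simp
  | add a b _ _ ha hb => simpa using add_mem ha hb
  | smul c a _ ha => simpa using Submodule.smul_of_tower_mem _ c ha

lemma span_homogeneousElems_subset (S : Submodule (GWA k f)ᵐᵒᵖ (GWA k f)) :
    (Submodule.span (GWA k f)ᵐᵒᵖ (homogeneousElems S) : Set (GWA k f)) ⊆
      Submodule.span k (homogeneousElems S) := by
  intro a ha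
  induction ha using Submodule.span_induction with
  | mem a ha => exact Submodule.subset_span ha
  | zero => exact zero_mem _
  | add a b _ _ ha hb => exact add_mem ha hb
  | smul b a _ ha =>
    have hmul : homogeneousElems S * ⋃ n, (gwaComp k f n : Set (GWA k f)) ⊆
        homogeneousElems S := by
      rintro _ ⟨a, ⟨haS, i, hi⟩, b, hb, rfl⟩
      obtain ⟨j, hj⟩ := Set.mem_iUnion.1 hb
      exact ⟨mul_mem_of_mem haS b, i + j, mul_mem_gwaComp hi hj⟩
    have := Submodule.mul_mem_mul ha (span_gwaComp_eq_top (f := f) ▸ Submodule.mem_top :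
      b.unop ∈ Submodule.span k _)
    rw [Submodule.span_mul_span] at this
    exact Submodule.span_mono hmul this

lemma isGraded_of_le_span {S : Submodule (GWA k f)ᵐᵒᵖ (GWA k f)}
    (hS : S ≤ Submodule.span (GWA k f)ᵐᵒᵖ (homogeneousElems S)) : IsGraded S :=
  fun _ ha n => coeff_mem_coeffIdeal_of_mem_span (span_homogeneousElems_subset S (hS ha)) n

lemma coeffIdeal_mono {S T : Submodule (GWA k f)ᵐᵒᵖ (GWA k f)} (h : S ≤ T) (n : ℤ) :
    coeffIdeal S n ≤ coeffIdeal T n :=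
  fun _ hp => h hp

section CoeffIdeal

variable {S : Submodule (GWA k f)ᵐᵒᵖ (GWA k f)}

lemma mul_xCoeff_mem_coeffIdeal {n : ℤ} {p : k[X]} (hp : p ∈ coeffIdeal S n) :
    p * xCoeff f n ∈ coeffIdeal S (n + 1) := by
  rw [mem_coeffIdeal, map_mul, mul_assoc, ← gwaMon_mul_gwaX, ← mul_assoc]
  exact mul_mem_of_mem hp _

lemma mul_yCoeff_mem_coeffIdeal {n : ℤ} {p : k[X]} (hp : p ∈ coeffIdeal S n) :
    p * yCoeff f n ∈ coeffIdeal S (n - 1) := by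
  rw [mem_coeffIdeal, map_mul, mul_assoc, ← gwaMon_mul_gwaY, ← mul_assoc]
  exact mul_mem_of_mem hp _

lemma xCoeff_ne_zero (hf : f ≠ 0) (n : ℤ) : xCoeff f n ≠ 0 := by
  unfold xCoeff
  split_ifs
  exacts [one_ne_zero, (taylor_eq_zero _ _).not.2 hf]

lemma yCoeff_ne_zero (hf : f ≠ 0) (n : ℤ) : yCoeff f n ≠ 0 := by
  unfold yCoeff
  split_ifs
  exacts [one_ne_zero, (taylor_eq_zero _ _).not.2 hf]

lemma coeffIdeal_ne_bot (hf : f ≠ 0) (hS : IsGraded S) (hS₀ : S ≠ ⊥) (n : ℤ) :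
    coeffIdeal S n ≠ ⊥ := by
  obtain ⟨a, haS, ha⟩ := Submodule.exists_mem_ne_zero_of_ne_bot hS₀
  obtain ⟨j, hj⟩ : ∃ j, coeff f a j ≠ 0 := by
    by_contra! h
    exact ha ((coeff f).map_eq_zero_iff.1 (Finsupp.ext h))
  have hj : coeffIdeal S j ≠ ⊥ := (Submodule.ne_bot_iff _).2 ⟨_, hS a haS j, hj⟩
  induction n using Int.inductionOn' (b := j) with
  | zero => exact hj
  | succ n _ ih =>
    obtain ⟨p, hp, hp₀⟩ := (Submodule.ne_bot_iff _).1 ih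
    exact (Submodule.ne_bot_iff _).2
      ⟨_, mul_xCoeff_mem_coeffIdeal hp, mul_ne_zero hp₀ (xCoeff_ne_zero hf n)⟩
  | pred n _ ih =>
    obtain ⟨p, hp, hp₀⟩ := (Submodule.ne_bot_iff _).1 ih
    exact (Submodule.ne_bot_iff _).2
      ⟨_, mul_yCoeff_mem_coeffIdeal hp, mul_ne_zero hp₀ (yCoeff_ne_zero hf n)⟩

lemma not_isRoot_xCoeff {μ : k} (hμ : ∀ j : ℤ, f.eval (μ + j) ≠ 0) (n : ℤ) :
    ¬(xCoeff f n).IsRoot μ := by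
  unfold xCoeff
  split_ifs
  exacts [by simp, by simpa [IsRoot, taylor_eval] using hμ n]

lemma not_isRoot_yCoeff {μ : k} (hμ : ∀ j : ℤ, f.eval (μ + j) ≠ 0) (n : ℤ) :
    ¬(yCoeff f n).IsRoot μ := by
  unfold yCoeff
  split_ifs
  exacts [by simp, by simpa [IsRoot, taylor_eval] using hμ (n - 1)]

/-- Multiplication by `x` and `y` relates neighbouring coefficient ideals through the factors
`xCoeff f n` and `yCoeff f n`, which do not vanish at `μ`. -/
lemma rootMultiplicity_generator_coeffIdeal_eq (hS : ∀ n, coeffIdeal S n ≠ ⊥) {μ : k}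
    (hμ : ∀ j : ℤ, f.eval (μ + j) ≠ 0) (n : ℤ) :
    rootMultiplicity μ (generator (coeffIdeal S n)) =
      rootMultiplicity μ (generator (coeffIdeal S 0)) := by
  have hgen : ∀ n, generator (coeffIdeal S n) ≠ 0 := fun n =>
    (eq_bot_iff_generator_eq_zero _).not.1 (hS n)
  have hle : ∀ {m n : ℤ} {p : k[X]}, ¬p.IsRoot μ →
      generator (coeffIdeal S n) * p ∈ coeffIdeal S m →
      rootMultiplicity μ (generator (coeffIdeal S m)) ≤
        rootMultiplicity μ (generator (coeffIdeal S n)) := fun {m n p} hp hmem => by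
    have h₀ : generator (coeffIdeal S n) * p ≠ 0 := mul_ne_zero (hgen n) fun h => hp (by simp [h])
    calc rootMultiplicity μ (generator (coeffIdeal S m))
        ≤ rootMultiplicity μ (generator (coeffIdeal S n) * p) :=
          rootMultiplicity_le_rootMultiplicity_of_dvd h₀ ((mem_iff_generator_dvd _).1 hmem) μ
      _ = rootMultiplicity μ (generator (coeffIdeal S n)) := by
          rw [rootMultiplicity_mul h₀, rootMultiplicity_eq_zero hp, add_zero]
  have hstep : ∀ n, rootMultiplicity μ (generator (coeffIdeal S (n + 1))) =
      rootMultiplicity μ (generator (coeffIdeal S n)) := fun n => by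
    have hy := mul_yCoeff_mem_coeffIdeal (generator_mem (coeffIdeal S (n + 1)))
    rw [add_sub_cancel_right] at hy
    exact le_antisymm
      (hle (not_isRoot_xCoeff hμ n) (mul_xCoeff_mem_coeffIdeal (generator_mem _)))
      (hle (not_isRoot_yCoeff hμ (n + 1)) hy)
  induction n using Int.induction_on with
  | zero => rfl
  | succ n ih => rw [hstep, ih]
  | pred n ih => rw [← ih, ← hstep, sub_add_cancel]

end CoeffIdeal

lemma evalZ_mul_injective {p : k[X]} (hp : p ≠ 0) :
    Function.Injective (evalZ f p * · : GWA k f → GWA k f) := fun a b h => by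
  have := congrArg (coeff f) h
  simp only [coeff_evalZ_mul] at this
  exact (coeff f).injective (smul_right_injective _ hp this)

lemma mem_gwaComp_of_evalZ_mul_mem {p : k[X]} (hp : p ≠ 0) {n : ℤ} {a : GWA k f}
    (ha : evalZ f p * a ∈ gwaComp k f n) : a ∈ gwaComp k f n := by
  obtain ⟨q, hq⟩ := mem_gwaComp_iff_coeff.1 ha
  rw [coeff_evalZ_mul] at hq
  refine mem_gwaComp_iff_coeff.2 ⟨coeff f a n, Finsupp.ext fun j => ?_⟩
  rcases eq_or_ne j n with rfl | hj
  · simp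
  · have := DFunLike.congr_fun hq j
    simp only [Finsupp.smul_apply, smul_eq_mul, Finsupp.single_eq_of_ne hj] at this
    simpa [Finsupp.single_eq_of_ne hj, hp] using this

lemma mul_evalZ_mem {S : Submodule (GWA k f)ᵐᵒᵖ (GWA k f)} {a : GWA k f} {g : k[X]}
    (h : ∀ n ∈ (coeff f a).support, coeff f a n * taylor (n : k) g ∈ coeffIdeal S n) :
    a * evalZ f g ∈ S := by
  rw [eq_sum_coeff a, Finsupp.sum, Finset.sum_mul]
  refine Submodule.sum_mem _ fun n hn => ?_
  rw [mul_assoc, gwaMon_mul_evalZ, ← mul_assoc, ← map_mul]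
  exact h n hn

variable {P Q : Submodule (GWA k f)ᵐᵒᵖ (GWA k f)}

lemma range_subtype_comp_le (ψ : P →ₗ[(GWA k f)ᵐᵒᵖ] Q) : LinearMap.range (Q.subtype ∘ₗ ψ) ≤ Q :=
  (LinearMap.range_comp_le_range ψ Q.subtype).trans_eq Q.range_subtype

namespace IsGraded

def component (hP : IsGraded P) (m : P) (n : ℤ) : P :=
  ⟨evalZ f (coeff f m n) * gwaMon k f n, hP _ m.2 n⟩

lemma sum_component (hP : IsGraded P) (m : P) :
    ∑ n ∈ (coeff f m).support, hP.component m n = m :=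
  Subtype.ext <| by rw [Submodule.coe_sum]; exact (eq_sum_coeff (m : GWA k f)).symm

lemma component_mem_gwaComp (hP : IsGraded P) (m : P) (n : ℤ) :
    (hP.component m n : GWA k f) ∈ gwaComp k f n :=
  evalZ_mul_gwaMon_mem _ _

lemma isGraded_range (hP : IsGraded P) {ψ : P →ₗ[(GWA k f)ᵐᵒᵖ] Q}
    (hψ : IsGradedHom k f P Q ψ) : IsGraded (LinearMap.range (Q.subtype ∘ₗ ψ)) := by
  rintro _ ⟨m, rfl⟩ n
  refine coeff_mem_coeffIdeal_of_mem_span ?_ n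
  rw [← hP.sum_component m, map_sum]
  exact Submodule.sum_mem _ fun j _ => Submodule.subset_span
    ⟨⟨hP.component m j, rfl⟩, j, hψ j _ (hP.component_mem_gwaComp m j)⟩

/-- On a homogeneous element of degree `n`, left multiplication by `p(z)` is right multiplication
by `p(z - n)`, which commutes with `ψ`. -/
lemma exists_evalZ_mul (hP : IsGraded P) {ψ : P →ₗ[(GWA k f)ᵐᵒᵖ] Q}
    (hψ : IsGradedHom k f P Q ψ) (p : k[X]) (m : P) :
    ∃ m' : P, (m' : GWA k f) = evalZ f p * m ∧ (ψ m' : GWA k f) = evalZ f p * ψ m := by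
  refine ⟨∑ n ∈ (coeff f m).support,
    MulOpposite.op (evalZ f (taylor (-n : k) p)) • hP.component m n, ?_, ?_⟩
  · conv_rhs => rw [← hP.sum_component m, Submodule.coe_sum, Finset.mul_sum]
    rw [Submodule.coe_sum]
    exact Finset.sum_congr rfl fun n _ =>
      (evalZ_mul_eq_mul_evalZ_of_mem_gwaComp (hP.component_mem_gwaComp m n) p).symm
  · conv_rhs => rw [← hP.sum_component m, map_sum, Submodule.coe_sum, Finset.mul_sum]
    rw [map_sum, Submodule.coe_sum]
    refine Finset.sum_congr rfl fun n _ => ?_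
    rw [map_smul]
    exact (evalZ_mul_eq_mul_evalZ_of_mem_gwaComp (hψ n _ (hP.component_mem_gwaComp m n)) p).symm

end IsGraded

lemma exists_mem_evalZ_mul_eq {p : k[X]} {a : GWA k f}
    (ha : ∀ n, ∃ t ∈ coeffIdeal Q n, coeff f a n = p * t) : ∃ u ∈ Q, evalZ f p * u = a := by
  choose t htQ ht using ha
  refine ⟨∑ n ∈ (coeff f a).support, evalZ f (t n) * gwaMon k f n,
    Submodule.sum_mem _ fun n _ => htQ n, ?_⟩
  conv_rhs => rw [eq_sum_coeff a]
  simp only [Finset.mul_sum, Finsupp.sum, ht, map_mul, mul_assoc]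

lemma exists_isGradedHom_evalZ_mul_eq (hP : IsGraded P) {ψ : P →ₗ[(GWA k f)ᵐᵒᵖ] Q}
    (hψ : IsGradedHom k f P Q ψ) {p : k[X]} (hp : p ≠ 0)
    (hdiv : ∀ n, ∀ r ∈ coeffIdeal (LinearMap.range (Q.subtype ∘ₗ ψ)) n,
      ∃ t ∈ coeffIdeal Q n, r = p * t) :
    ∃ G : P →ₗ[(GWA k f)ᵐᵒᵖ] Q, IsGradedHom k f P Q G ∧ ∀ m, evalZ f p * G m = ψ m := by
  let L : Q →ₗ[(GWA k f)ᵐᵒᵖ] GWA k f := Algebra.lsmul k (GWA k f)ᵐᵒᵖ _ (evalZ f p) ∘ₗ Q.subtype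
  have hL : Function.Injective L := (evalZ_mul_injective hp).comp Subtype.val_injective
  have hψL : ∀ m, (ψ m : GWA k f) ∈ LinearMap.range L := fun m => by
    obtain ⟨u, huQ, hu⟩ := exists_mem_evalZ_mul_eq (Q := Q) (p := p) fun n =>
      hdiv n _ (hP.isGraded_range hψ _ ⟨m, rfl⟩ n)
    exact ⟨⟨u, huQ⟩, hu⟩
  let G := (LinearEquiv.ofInjective L hL).symm.toLinearMap ∘ₗ
    (Q.subtype ∘ₗ ψ).codRestrict (LinearMap.range L) hψL
  have hG : ∀ m, evalZ f p * G m = ψ m := fun m =>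
    congrArg Subtype.val ((LinearEquiv.ofInjective L hL).apply_symm_apply _)
  refine ⟨G, fun n m hm => mem_gwaComp_of_evalZ_mul_mem hp ?_, hG⟩
  rw [hG]
  exact hψ n m hm

section Maximal

variable {ψ : P →ₗ[(GWA k f)ᵐᵒᵖ] Q} (hP : IsGraded P) (hψ : IsGradedHom k f P Q ψ)
  (hmax : ∀ g : P →ₗ[(GWA k f)ᵐᵒᵖ] Q, IsGradedHom k f P Q g →
    ¬(Set.range (fun m : P => (ψ m : GWA k f)) ⊂ Set.range (fun m : P => (g m : GWA k f))))
include hP hψ hmax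

/-- Otherwise dividing `ψ` by `p(z)` gives a graded map with strictly larger image. -/
lemma isUnit_of_maximal {n₀ : ℤ} (hn₀ : coeffIdeal (LinearMap.range (Q.subtype ∘ₗ ψ)) n₀ ≠ ⊥)
    {p : k[X]} (hdiv : ∀ n, ∀ r ∈ coeffIdeal (LinearMap.range (Q.subtype ∘ₗ ψ)) n,
      ∃ t ∈ coeffIdeal Q n, r = p * t) : IsUnit p := by
  set R := LinearMap.range (Q.subtype ∘ₗ ψ)
  set r := generator (coeffIdeal R n₀)
  have hr : r ≠ 0 := by rwa [Ne, ← eq_bot_iff_generator_eq_zero]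
  have hp : p ≠ 0 := by
    rintro rfl
    obtain ⟨t, -, hrt⟩ := hdiv n₀ r (generator_mem _)
    exact hr (by simpa using hrt)
  obtain ⟨G, hG, hGψ⟩ := exists_isGradedHom_evalZ_mul_eq hP hψ hp hdiv
  by_contra hu
  refine hmax G hG (ssubset_iff_subset_not_subset.2 ⟨?_, fun hsub => hu ?_⟩)
  · rintro _ ⟨m, rfl⟩
    obtain ⟨m', -, hm'⟩ := hP.exists_evalZ_mul hψ p m
    exact ⟨m', evalZ_mul_injective hp (show evalZ f p * G m' = evalZ f p * ψ m by rw [hGψ, hm'])⟩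
  · obtain ⟨m₀, hm₀⟩ := generator_mem (coeffIdeal R n₀)
    obtain ⟨m₁, hm₁⟩ := hsub ⟨m₀, rfl⟩
    have hc : p * coeff f (G m₀) n₀ = r := by
      have := DFunLike.congr_fun (congrArg (coeff f) (hGψ m₀)) n₀
      rwa [coeff_evalZ_mul, show (ψ m₀ : GWA k f) = _ from hm₀, coeff_evalZ_mul_gwaMon,
        Finsupp.single_eq_same] at this
    have hcR : coeff f (G m₀) n₀ ∈ coeffIdeal R n₀ := hP.isGraded_range hψ _ ⟨m₁, hm₁⟩ n₀
    obtain ⟨s, hs⟩ := (mem_iff_generator_dvd _).1 hcR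
    exact IsUnit.of_mul_eq_one s <| mul_left_cancel₀ hr (by linear_combination hc - p * hs)

variable (hR : ∀ n, coeffIdeal (LinearMap.range (Q.subtype ∘ₗ ψ)) n ≠ ⊥)
include hR


lemma rootMultiplicity_generator_range_le {μ : k} (hμ : ∀ j : ℤ, f.eval (μ + j) ≠ 0) (n : ℤ) :
    rootMultiplicity μ (generator (coeffIdeal (LinearMap.range (Q.subtype ∘ₗ ψ)) n)) ≤
      rootMultiplicity μ (generator (coeffIdeal Q n)) := by
  set R := LinearMap.range (Q.subtype ∘ₗ ψ)
  have hRQ := coeffIdeal_mono (range_subtype_comp_le ψ)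
  have hQ : ∀ n, coeffIdeal Q n ≠ ⊥ := fun n => ne_bot_of_le_ne_bot (hR n) (hRQ n)
  by_contra! hlt
  refine not_isUnit_X_sub_C μ (isUnit_of_maximal hP hψ hmax (hR 0) fun j r hr => ?_)
  have hlt' : rootMultiplicity μ (generator (coeffIdeal Q j)) <
      rootMultiplicity μ (generator (coeffIdeal R j)) := by
    rwa [rootMultiplicity_generator_coeffIdeal_eq hQ hμ,
      rootMultiplicity_generator_coeffIdeal_eq hR hμ,
      ← rootMultiplicity_generator_coeffIdeal_eq hQ hμ n,
      ← rootMultiplicity_generator_coeffIdeal_eq hR hμ n]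
  obtain ⟨e, he⟩ := X_sub_C_mul_dvd_of_rootMultiplicity_lt
    ((mem_iff_generator_dvd _).1 (hRQ j (generator_mem _)))
    ((eq_bot_iff_generator_eq_zero _).not.1 (hR j)) hlt'
  obtain ⟨s, hs⟩ := (mem_iff_generator_dvd _).1 hr
  exact ⟨generator (coeffIdeal Q j) * (e * s),
    Ideal.mul_mem_right _ _ (generator_mem _), by rw [hs, he]; ring⟩

lemma exists_eval_add_intCast_eq_zero {n : ℤ} {d : k[X]}
    (hd : generator (coeffIdeal (LinearMap.range (Q.subtype ∘ₗ ψ)) n) =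
      generator (coeffIdeal Q n) * d) {μ : k} (hμ : d.IsRoot μ) :
    ∃ j : ℤ, f.eval (μ + j) = 0 := by
  by_contra! hbad
  have hle := rootMultiplicity_generator_range_le hP hψ hmax hR hbad n
  have hR₀ := (eq_bot_iff_generator_eq_zero _).not.1 (hR n)
  rw [hd, rootMultiplicity_mul (hd ▸ hR₀)] at hle
  have := (rootMultiplicity_pos (right_ne_zero_of_mul (hd ▸ hR₀))).2 hμ
  omega

end Maximal

theorem exists_mul_evalZ_eq_of_maximal (hf : f ≠ 0) (hP : IsGraded P) (hQ : IsGraded Q)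
    (hP₀ : P ≠ ⊥) {ψ : P →ₗ[(GWA k f)ᵐᵒᵖ] Q} (hψ : IsGradedHom k f P Q ψ)
    (hψinj : Function.Injective ψ)
    (hmax : ∀ g : P →ₗ[(GWA k f)ᵐᵒᵖ] Q, IsGradedHom k f P Q g →
      ¬(Set.range (fun m : P => (ψ m : GWA k f)) ⊂ Set.range (fun m : P => (g m : GWA k f))))
    (q : Q) :
    ∃ g : k[X], g ≠ 0 ∧ (∀ μ : k, g.IsRoot μ → ∃ j : ℤ, f.eval (μ + j) = 0) ∧
      ∃ m : P, (q : GWA k f) * evalZ f g = ψ m := by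
  set R := LinearMap.range (Q.subtype ∘ₗ ψ)
  have hR₀ : R ≠ ⊥ := by
    obtain ⟨a, haP, ha⟩ := Submodule.exists_mem_ne_zero_of_ne_bot hP₀
    refine (Submodule.ne_bot_iff _).2 ⟨_, ⟨⟨a, haP⟩, rfl⟩, fun h => ha ?_⟩
    simpa using hψinj (show ψ ⟨a, haP⟩ = ψ 0 by rw [map_zero]; exact Subtype.ext h)
  have hR := coeffIdeal_ne_bot hf (hP.isGraded_range hψ) hR₀
  choose d hd using fun n => (mem_iff_generator_dvd (coeffIdeal Q n)).1
    (coeffIdeal_mono (range_subtype_comp_le ψ) n (generator_mem (coeffIdeal R n)))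
  have hd₀ : ∀ n, d n ≠ 0 := fun n h =>
    (eq_bot_iff_generator_eq_zero _).not.1 (hR n) (by rw [hd, h, mul_zero])
  refine ⟨∏ n ∈ (coeff f q).support, taylor (-n : k) (d n),
    Finset.prod_ne_zero_iff.2 fun n _ => (taylor_eq_zero _ _).not.2 (hd₀ n), fun μ hμ => ?_, ?_⟩
  · rw [IsRoot, eval_prod, Finset.prod_eq_zero_iff] at hμ
    obtain ⟨n, -, hn⟩ := hμ
    obtain ⟨j, hj⟩ := exists_eval_add_intCast_eq_zero hP hψ hmax hR (hd n)
      (by rwa [taylor_eval] at hn)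
    exact ⟨-n + j, by rwa [Int.cast_add, Int.cast_neg, ← add_assoc]⟩
  · obtain ⟨m, hm⟩ := mul_evalZ_mem (S := R) (a := q)
      (g := ∏ n ∈ (coeff f q).support, taylor (-n : k) (d n)) fun n hn => by
      rw [mem_iff_generator_dvd, hd]
      refine mul_dvd_mul ((mem_iff_generator_dvd _).1 (hQ _ q.2 n)) ?_
      have := map_dvd (taylorAlgHom (n : k))
        (Finset.dvd_prod_of_mem (fun j : ℤ => taylor (-j : k) (d j)) hn)
      simpa only [taylorAlgHom_apply, taylor_taylor, add_neg_cancel, taylor_zero] using this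
    exact ⟨m, hm.symm⟩

end GWA

theorem maximal_embedding_cokernel_support_general
    (k : Type) [Field k] (α : k)
    (P Q : Submodule (GWA k (X * (X + C α)))ᵐᵒᵖ (GWA k (X * (X + C α))))
    (hPne : P ≠ ⊥)
    (hPgr : P = Submodule.span (GWA k (X * (X + C α)))ᵐᵒᵖ
      {m | m ∈ P ∧ ∃ n : ℤ, m ∈ gwaComp k (X * (X + C α)) n})
    (hQgr : Q = Submodule.span (GWA k (X * (X + C α)))ᵐᵒᵖ
      {m | m ∈ Q ∧ ∃ n : ℤ, m ∈ gwaComp k (X * (X + C α)) n})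
    (ψ : ↥P →ₗ[(GWA k (X * (X + C α)))ᵐᵒᵖ] ↥Q)
    (hψgr : IsGradedHom k (X * (X + C α)) P Q ψ)
    (hψinj : Function.Injective ψ)
    (hmax : ∀ g : ↥P →ₗ[(GWA k (X * (X + C α)))ᵐᵒᵖ] ↥Q,
      IsGradedHom k (X * (X + C α)) P Q g →
      ¬(Set.range (fun m : ↥P => (ψ m : GWA k (X * (X + C α)))) ⊂
        Set.range (fun m : ↥P => (g m : GWA k (X * (X + C α)))))) :
    ∀ q : ↥Q, ∃ g : Polynomial k, g ≠ 0 ∧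
      (∀ r : k, g.IsRoot r → ∃ n : ℤ, r = (n : k) ∨ r = (n : k) - α) ∧
      ∃ m : ↥P,
        (q : GWA k (X * (X + C α))) * aeval (gwaZ k (X * (X + C α))) g =
          (ψ m : GWA k (X * (X + C α))) := by
  intro q
  obtain ⟨g, hg₀, hroots, hmem⟩ := GWA.exists_mul_evalZ_eq_of_maximal
    (mul_ne_zero X_ne_zero (X_add_C_ne_zero α)) (GWA.isGraded_of_le_span hPgr.le)
    (GWA.isGraded_of_le_span hQgr.le) hPne hψgr hψinj hmax q
  refine ⟨g, hg₀, fun r hr => ?_, hmem⟩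
  obtain ⟨j, hj⟩ := hroots r hr
  rcases (by simpa using hj : r + j = 0 ∨ r + j + α = 0) with h | h
  · exact ⟨-j, Or.inl (by push_cast; linear_combination h)⟩
  · exact ⟨-j, Or.inr (by push_cast; linear_combination h)⟩

set_option maxHeartbeats 1000000 in
/-- Let `P` and `Q` be finitely generated graded rank one projective
`A(f)`-modules embedded in `Q_gr(A(f))` (realized as nonzero graded right ideals), and
let `ψ : P → Q` be a maximal embedding, i.e. an injective (graded) homomorphism such
that no (graded) homomorphism `g : P → Q` has image strictly containing `ψ(P)`.  Then
the finite-length module `Q/ψ(P)` is supported, as a left `k[z]`-module, only at points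
of `ℤ ∪ (ℤ − α)`: every element of `Q` is carried into `ψ(P)` by (the right action of) a
nonzero polynomial `g(z)` all of whose roots lie in `ℤ ∪ (ℤ − α)`. -/
theorem maximal_embedding_cokernel_support
    (k : Type) [Field k] [IsAlgClosed k] [CharZero k] (α : k)
    (P Q : Submodule (GWA k (X * (X + C α)))ᵐᵒᵖ (GWA k (X * (X + C α))))
    (hPne : P ≠ ⊥) (hQne : Q ≠ ⊥) (hPfg : P.FG) (hQfg : Q.FG)
    (hPgr : P = Submodule.span (GWA k (X * (X + C α)))ᵐᵒᵖ
      {m | m ∈ P ∧ ∃ n : ℤ, m ∈ gwaComp k (X * (X + C α)) n})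
    (hQgr : Q = Submodule.span (GWA k (X * (X + C α)))ᵐᵒᵖ
      {m | m ∈ Q ∧ ∃ n : ℤ, m ∈ gwaComp k (X * (X + C α)) n})
    (hPproj : Module.Projective (GWA k (X * (X + C α)))ᵐᵒᵖ ↥P)
    (hQproj : Module.Projective (GWA k (X * (X + C α)))ᵐᵒᵖ ↥Q)
    (ψ : ↥P →ₗ[(GWA k (X * (X + C α)))ᵐᵒᵖ] ↥Q)
    (hψgr : IsGradedHom k (X * (X + C α)) P Q ψ)
    (hψinj : Function.Injective ψ)
    (hmax : ∀ g : ↥P →ₗ[(GWA k (X * (X + C α)))ᵐᵒᵖ] ↥Q,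
      IsGradedHom k (X * (X + C α)) P Q g →
      ¬(Set.range (fun m : ↥P => (ψ m : GWA k (X * (X + C α)))) ⊂
        Set.range (fun m : ↥P => (g m : GWA k (X * (X + C α)))))) :
    ∀ q : ↥Q, ∃ g : Polynomial k, g ≠ 0 ∧
      (∀ r : k, g.IsRoot r → ∃ n : ℤ, r = (n : k) ∨ r = (n : k) - α) ∧
      ∃ m : ↥P,
        (q : GWA k (X * (X + C α))) * aeval (gwaZ k (X * (X + C α))) g =
          (ψ m : GWA k (X * (X + C α))) :=
  maximal_embedding_cokernel_support_general k α P Q hPne hPgr hQgr ψ hψgr hψinj hmax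

end
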